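/- Let $f(t_1, t_2, \dots)$ be a function with $f_{\alpha,\beta} := \partial_{t_\alpha}\partial_{t_\beta} f$. Then for $f = \mathcal{F}_{B_k}|_{v \mapsto t}$, the $B_k$ Coxeter Dubrovin–Frobenius potential with $k$ large enough (e.g., $k \ge 4$ suffices for the flows below), the dispersionless BKP flows hold: $f_{2,2} = \frac{4}{3} f_{1,1}^3 - 2 f_{1,2} f_{1,1} + f_{1,3}$, $f_{2,3} = 4 f_{1,2} f_{1,1}^2 - 2 f_{1,3} f_{1,1} - 2 f_{1,2}^2 + f_{1,4}$, $f_{2,4} = 4 f_{1,3} f_{1,1}^2 + 4 f_{1,2}^2 f_{1,1} - 2 f_{1,4} f_{1,1} - 4 f_{1,2} f_{1,3} + f_{1,5}$, where any $f_{1,\delta}$ with $\delta > k$ is set to the appropriate polynomial given by the $B_k$ structure (or zero when out of range per the stabilization conventions). -/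

import Mathlib

/-- Partial derivative in the `i`-th coordinate direction. -/
noncomputable def pd {n : ℕ} (i : Fin n) (f : (Fin n → ℝ) → ℝ) : (Fin n → ℝ) → ℝ :=
  fun x => fderiv ℝ f x (Pi.single i 1)

/-- The Dubrovin `B_5` Coxeter Dubrovin–Frobenius potential `𝓕_{B_5} = 𝓕_{5,5}` written
in the hierarchy variables: `x i` stands for `t_{i+1} = v^{i+1}`, where `v^β` is the
renumbered flat coordinate (`∂_1∂_δ f = η_{δγ} t_γ` with `η_{δγ} = (1/20) δ_{δ+γ,6}`). -/
noncomputable def FB5 : (Fin 5 → ℝ) → ℝ := fun x =>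
  (x 1) ^ 2 * x 2 / 40 + x 0 * (x 2) ^ 2 / 40 + x 0 * x 1 * x 3 / 20
    - (x 2) ^ 3 * x 3 / 400 - x 1 * x 2 * (x 3) ^ 2 / 200 + x 2 * (x 3) ^ 4 / 4000
    + (x 0) ^ 2 * x 4 / 40 - x 1 * (x 2) ^ 2 * x 4 / 400 - (x 1) ^ 2 * x 3 * x 4 / 400
    + 3 * (x 2) ^ 2 * (x 3) ^ 2 * x 4 / 4000 + x 1 * (x 3) ^ 3 * x 4 / 6000
    - 3 * (x 3) ^ 5 * x 4 / 200000 + (x 2) ^ 3 * (x 4) ^ 2 / 12000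
    + x 1 * x 2 * x 3 * (x 4) ^ 2 / 2000 - x 2 * (x 3) ^ 3 * (x 4) ^ 2 / 20000
    + (x 1) ^ 2 * (x 4) ^ 3 / 12000 - (x 2) ^ 2 * x 3 * (x 4) ^ 3 / 40000
    + (x 3) ^ 4 * (x 4) ^ 3 / 400000 + x 2 * (x 3) ^ 2 * (x 4) ^ 4 / 400000
    + (x 2) ^ 2 * (x 4) ^ 5 / 2000000 - (x 3) ^ 3 * (x 4) ^ 5 / 12000000
    + (x 3) ^ 2 * (x 4) ^ 7 / 280000000 + (x 4) ^ 11 / 1980000000000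

/-! `FB5` is a polynomial function, so its partial derivatives are evaluations of formal
partial derivatives of the corresponding `MvPolynomial`. The unit direction `t₁` is flat:
`∂₁∂_δ f = t_{6-δ}/20`, so every `f_{1,δ}` is a coordinate and each flow becomes an explicit
polynomial identity in `t`. -/

open MvPolynomial

section PartialDerivative

variable {n : ℕ} {f g : (Fin n → ℝ) → ℝ}

lemma pd_const (i : Fin n) (c : ℝ) : pd i (fun _ => c) = 0 := by
  funext x; simp [pd]

lemma pd_coord (i j : Fin n) : pd i (fun x => x j) = fun _ => (Pi.single i 1 : Fin n → ℝ) j := by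
  funext x
  have h : (fun x : Fin n → ℝ => x j) = ContinuousLinearMap.proj (R := ℝ) j := rfl
  simp [pd, h]

lemma pd_add (i : Fin n) (hf : Differentiable ℝ f) (hg : Differentiable ℝ g) :
    pd i (f + g) = pd i f + pd i g := by
  funext x; simp [pd, fderiv_add (hf x) (hg x)]

lemma pd_mul (i : Fin n) (hf : Differentiable ℝ f) (hg : Differentiable ℝ g) :
    pd i (f * g) = pd i f * g + f * pd i g := by
  funext x; simp [pd, fderiv_mul (hf x) (hg x)]; ring

lemma differentiable_eval (p : MvPolynomial (Fin n) ℝ) : Differentiable ℝ (eval · p) :=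
  fun x => ((AnalyticOnNhd.eval_mvPolynomial p) x (Set.mem_univ x)).differentiableAt

theorem pd_eval (i : Fin n) (p : MvPolynomial (Fin n) ℝ) :
    pd i (eval · p) = (eval · (pderiv i p)) := by
  induction p using MvPolynomial.induction_on with
  | C a => simp [pd_const, Pi.zero_def]
  | add p q hp hq =>
    have hsum : (eval · (p + q)) = (eval · p) + (eval · q) := by ext; simp
    rw [hsum, pd_add i (differentiable_eval p) (differentiable_eval q), hp, hq]
    ext; simp
  | mul_X p j hp =>
    have hprod : (eval · (p * X j)) = (eval · p) * fun x => x j := by ext; simp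
    rw [hprod, pd_mul i (differentiable_eval p) (differentiable_apply j), hp, pd_coord]
    ext x
    simp only [Pi.add_apply, Pi.mul_apply, map_add, map_mul, Derivation.leibniz, pderiv_X,
      smul_eq_mul, eval_X, Pi.single_apply, apply_ite (eval x), map_one, map_zero]
    ring

end PartialDerivative

noncomputable def potentialB5 : MvPolynomial (Fin 5) ℝ :=
  C (1/40) * X 1 ^ 2 * X 2 + C (1/40) * X 0 * X 2 ^ 2 + C (1/20) * X 0 * X 1 * X 3
    - C (1/400) * X 2 ^ 3 * X 3 - C (1/200) * X 1 * X 2 * X 3 ^ 2 + C (1/4000) * X 2 * X 3 ^ 4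
    + C (1/40) * X 0 ^ 2 * X 4 - C (1/400) * X 1 * X 2 ^ 2 * X 4 - C (1/400) * X 1 ^ 2 * X 3 * X 4
    + C (3/4000) * X 2 ^ 2 * X 3 ^ 2 * X 4 + C (1/6000) * X 1 * X 3 ^ 3 * X 4
    - C (3/200000) * X 3 ^ 5 * X 4 + C (1/12000) * X 2 ^ 3 * X 4 ^ 2
    + C (1/2000) * X 1 * X 2 * X 3 * X 4 ^ 2 - C (1/20000) * X 2 * X 3 ^ 3 * X 4 ^ 2
    + C (1/12000) * X 1 ^ 2 * X 4 ^ 3 - C (1/40000) * X 2 ^ 2 * X 3 * X 4 ^ 3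
    + C (1/400000) * X 3 ^ 4 * X 4 ^ 3 + C (1/400000) * X 2 * X 3 ^ 2 * X 4 ^ 4
    + C (1/2000000) * X 2 ^ 2 * X 4 ^ 5 - C (1/12000000) * X 3 ^ 3 * X 4 ^ 5
    + C (1/280000000) * X 3 ^ 2 * X 4 ^ 7 + C (1/1980000000000) * X 4 ^ 11

lemma FB5_eq_eval : FB5 = (eval · potentialB5) := by
  funext x
  simp only [FB5, potentialB5, map_add, map_sub, map_mul, map_pow, eval_C, eval_X]
  ring

lemma pd_pd_FB5 (i j : Fin 5) :
    pd i (pd j FB5) = (eval · (pderiv i (pderiv j potentialB5))) := by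
  rw [FB5_eq_eval, pd_eval, pd_eval]

lemma pd_zero_pd_FB5 (δ : Fin 5) (x : Fin 5 → ℝ) : pd 0 (pd δ FB5) x = x δ.rev / 20 := by
  rw [pd_pd_FB5]
  fin_cases δ <;>
  · simp only [potentialB5, map_add, map_sub, map_mul, map_pow, map_nsmul, Derivation.leibniz,
      Derivation.leibniz_pow, Derivation.map_one_eq_zero, pderiv_C, pderiv_X, Pi.single_apply,
      Fin.isValue, Fin.reduceFinMk, Fin.reduceEq, Fin.reduceRev, reduceIte, Nat.reduceSub,
      pow_one, smul_eq_mul, map_zero, map_one, eval_C, eval_X]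
    ring

/-- The first dispersionless BKP flows in Fay form hold for `f = 𝓕_{B_5}|_{v ↦ t}`:
with `f_{α,β} = ∂_{t_α}∂_{t_β} f` (so `f_{α,β} = pd (α-1) (pd (β-1) FB5)`),
`f_{2,2} = (4/3) f_{1,1}³ - 2 f_{1,2} f_{1,1} + f_{1,3}`,
`f_{2,3} = 4 f_{1,2} f_{1,1}² - 2 f_{1,3} f_{1,1} - 2 f_{1,2}² + f_{1,4}`,
`f_{2,4} = 4 f_{1,3} f_{1,1}² + 4 f_{1,2}² f_{1,1} - 2 f_{1,4} f_{1,1}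
           - 4 f_{1,2} f_{1,3} + f_{1,5}`. -/
theorem stmt15 :
    (∀ x : Fin 5 → ℝ,
      pd 1 (pd 1 FB5) x
        = 4/3 * (pd 0 (pd 0 FB5) x) ^ 3 - 2 * (pd 0 (pd 1 FB5) x) * (pd 0 (pd 0 FB5) x)
            + pd 0 (pd 2 FB5) x) ∧
    (∀ x : Fin 5 → ℝ,
      pd 1 (pd 2 FB5) x
        = 4 * (pd 0 (pd 1 FB5) x) * (pd 0 (pd 0 FB5) x) ^ 2
            - 2 * (pd 0 (pd 2 FB5) x) * (pd 0 (pd 0 FB5) x)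
            - 2 * (pd 0 (pd 1 FB5) x) ^ 2 + pd 0 (pd 3 FB5) x) ∧
    (∀ x : Fin 5 → ℝ,
      pd 1 (pd 3 FB5) x
        = 4 * (pd 0 (pd 2 FB5) x) * (pd 0 (pd 0 FB5) x) ^ 2
            + 4 * (pd 0 (pd 1 FB5) x) ^ 2 * (pd 0 (pd 0 FB5) x)
            - 2 * (pd 0 (pd 3 FB5) x) * (pd 0 (pd 0 FB5) x)
            - 4 * (pd 0 (pd 1 FB5) x) * (pd 0 (pd 2 FB5) x) + pd 0 (pd 4 FB5) x) := by
  simp only [pd_zero_pd_FB5, Fin.isValue, Fin.reduceRev, pd_pd_FB5]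
  refine ⟨fun x => ?_, fun x => ?_, fun x => ?_⟩ <;>
  · simp only [potentialB5, map_add, map_sub, map_mul, map_pow, map_nsmul, Derivation.leibniz,
      Derivation.leibniz_pow, Derivation.map_one_eq_zero, pderiv_C, pderiv_X, Pi.single_apply,
      Fin.isValue, Fin.reduceEq, reduceIte, Nat.reduceSub,
      pow_one, smul_eq_mul, map_zero, map_one, eval_C, eval_X]
    ring
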